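/- Let n be a positive integer, let g₁, g₂, v ∈ F₂[x] have degree less than n with g₁·h₁ = xⁿ−1 and g₂·h₂ = xⁿ−1 for some h₁, h₂ ∈ F₂[x], gcd(g₁, g₂) = 1 and gcd(v−1, xⁿ−1) = 1, and set g₁^⊥ = x^{deg h₁}·h₁(1/x). If g₂ divides g₁^⊥ in F₂[x] and v̄ = v (where v̄ denotes the polynomial v₀ + v_{n−1}x + v_{n−2}x² + ⋯ + v₁x^{n−1}), then the two-generator quasi-cyclic code C(g₁,g₂,v) is symplectic dual-containing, i.e., C(g₁,g₂,v)^⊥ₛ ⊆ C(g₁,g₂,v). -/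

import Mathlib

/-!
Write `q = xⁿ - 1`. The Euclidean inner product of the coefficient vectors of `f mod q` and
`g mod q` is a bilinear pairing `⟪f, g⟫` on `F[x]` in which multiplication by `a` is adjoint to
multiplication by `a(x^{n-1})`, i.e. by `a(x⁻¹)` modulo `q`. If `g h = q`, then
`g(x⁻¹) · h^rev ≡ x^{-deg g} (g h)^rev ≡ 0`, so `⟪g s, t h^rev⟫ = 0`; together with `v̄ = v`
this makes the code `D` built like `C = C(g₁, g₂, v)` from `(h₂^rev, h₁^rev, v)` symplectically
orthogonal to `C`.

Since `v² - 1 = (v - 1)²` is prime to `q`, a pair `(a, b)` gives the zero codeword iff `h₁ ∣ a`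
and `h₂ ∣ b`; hence `dim C = deg h₁ + deg h₂`, and likewise
`dim D = deg g₂^rev + deg g₁^rev ≥ 2n - dim C = dim C^⊥ₛ`, so `D = C^⊥ₛ`. Finally, writing
`h₁^rev = g₂ t`, one gets `h₂^rev = g₁ t^rev`, so the generators of `D` are multiples of those of
`C` and `D ⊆ C`.
-/

open Polynomial

/-- The coefficient-vector map `[g] = (g₀, …, g_{n−1}) ∈ F₂ⁿ` (as a linear map). -/
noncomputable def vecL (n : ℕ) : Polynomial (ZMod 2) →ₗ[ZMod 2] (Fin n → ZMod 2) :=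
  LinearMap.pi fun i => Polynomial.lcoeff (ZMod 2) (i : ℕ)

/-- The linear map `(a, b) ↦ ([a·v·g₁ + b·g₂ mod xⁿ−1], [a·g₁ + b·v·g₂ mod xⁿ−1])`. -/
noncomputable def cwL (n : ℕ) (g₁ g₂ v : Polynomial (ZMod 2)) :
    (Polynomial (ZMod 2) × Polynomial (ZMod 2)) →ₗ[ZMod 2]
      ((Fin n → ZMod 2) × (Fin n → ZMod 2)) :=
  LinearMap.prod
    ((vecL n).comp ((Polynomial.modByMonicHom (X ^ n - 1)).comp
      ((LinearMap.mulRight (ZMod 2) (v * g₁)).comp (LinearMap.fst (ZMod 2) _ _) +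
       (LinearMap.mulRight (ZMod 2) g₂).comp (LinearMap.snd (ZMod 2) _ _))))
    ((vecL n).comp ((Polynomial.modByMonicHom (X ^ n - 1)).comp
      ((LinearMap.mulRight (ZMod 2) g₁).comp (LinearMap.fst (ZMod 2) _ _) +
       (LinearMap.mulRight (ZMod 2) (v * g₂)).comp (LinearMap.snd (ZMod 2) _ _))))

/-- The two-generator quasi-cyclic code
`C(g₁,g₂,v) = { ([a·v·g₁ + b·g₂ mod xⁿ−1], [a·g₁ + b·v·g₂ mod xⁿ−1]) : a, b ∈ F₂[x] } ⊆ F₂^{2n}`,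
where `F₂^{2n}` is identified with `F₂ⁿ × F₂ⁿ`. -/
noncomputable def QCCode (n : ℕ) (g₁ g₂ v : Polynomial (ZMod 2)) :
    Submodule (ZMod 2) ((Fin n → ZMod 2) × (Fin n → ZMod 2)) :=
  LinearMap.range (cwL n g₁ g₂ v)

/-- Euclidean inner product on `F₂ⁿ`. -/
def einner (n : ℕ) (u w : Fin n → ZMod 2) : ZMod 2 := ∑ i, u i * w i

/-- Symplectic inner product `⟨u,w⟩ₛ = Σᵢ (uᵢ w_{n+i} − u_{n+i} wᵢ)` on `F₂ⁿ × F₂ⁿ ≅ F₂^{2n}`. -/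
def sinner (n : ℕ) (u w : (Fin n → ZMod 2) × (Fin n → ZMod 2)) : ZMod 2 :=
  ∑ i, (u.1 i * w.2 i - u.2 i * w.1 i)

/-- Symplectic dual `C^⊥ₛ = {w : ⟨u,w⟩ₛ = 0 for all u ∈ C}` of a linear code `C ⊆ F₂^{2n}`. -/
noncomputable def sympDual (n : ℕ)
    (C : Submodule (ZMod 2) ((Fin n → ZMod 2) × (Fin n → ZMod 2))) :
    Submodule (ZMod 2) ((Fin n → ZMod 2) × (Fin n → ZMod 2)) where
  carrier := {w | ∀ u ∈ C, sinner n u w = 0}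
  zero_mem' := by intro u _; simp [sinner]
  add_mem' := by
    intro w w' hw hw' u hu
    have h : sinner n u (w + w') = sinner n u w + sinner n u w' := by
      simp only [sinner, Prod.fst_add, Prod.snd_add, Pi.add_apply]
      rw [← Finset.sum_add_distrib]
      exact Finset.sum_congr rfl fun i _ => by ring
    rw [h, hw u hu, hw' u hu, add_zero]
  smul_mem' := by
    intro c w hw u hu
    have h : sinner n u (c • w) = c * sinner n u w := by
      simp only [sinner, Prod.smul_fst, Prod.smul_snd, Pi.smul_apply, smul_eq_mul,
        Finset.mul_sum]
      exact Finset.sum_congr rfl fun i _ => by ring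
    rw [h, hw u hu, mul_zero]

/-- Symplectic weight `wₛ(u) = #{i : (uᵢ, u_{n+i}) ≠ (0,0)}` on `F₂ⁿ × F₂ⁿ ≅ F₂^{2n}`. -/
def sympWt (n : ℕ) (u : (Fin n → ZMod 2) × (Fin n → ZMod 2)) : ℕ :=
  (Finset.univ.filter fun i : Fin n => (u.1 i, u.2 i) ≠ ((0 : ZMod 2), (0 : ZMod 2))).card

/-- For `f` of degree `< n`, the polynomial `f̄ = f₀ + f_{n−1}x + f_{n−2}x² + ⋯ + f₁x^{n−1}`. -/
noncomputable def barPoly (n : ℕ) (f : Polynomial (ZMod 2)) : Polynomial (ZMod 2) :=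
  ∑ i ∈ Finset.range n, Polynomial.C (f.coeff (if i = 0 then 0 else n - i)) * Polynomial.X ^ i

/-- The linear map `(c, d) ↦ ([c·G₁ + d·V·G₂ mod xⁿ−1], [c·V·G₁ + d·G₂ mod xⁿ−1])`;
with `G₁ = g₁^⊥`, `G₂ = g₂^⊥` and `V = v̄` its range is the claimed symplectic dual code. -/
noncomputable def dualCwL (n : ℕ) (G₁ G₂ V : Polynomial (ZMod 2)) :
    (Polynomial (ZMod 2) × Polynomial (ZMod 2)) →ₗ[ZMod 2]
      ((Fin n → ZMod 2) × (Fin n → ZMod 2)) :=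
  LinearMap.prod
    ((vecL n).comp ((Polynomial.modByMonicHom (X ^ n - 1)).comp
      ((LinearMap.mulRight (ZMod 2) G₁).comp (LinearMap.fst (ZMod 2) _ _) +
       (LinearMap.mulRight (ZMod 2) (V * G₂)).comp (LinearMap.snd (ZMod 2) _ _))))
    ((vecL n).comp ((Polynomial.modByMonicHom (X ^ n - 1)).comp
      ((LinearMap.mulRight (ZMod 2) (V * G₁)).comp (LinearMap.fst (ZMod 2) _ _) +
       (LinearMap.mulRight (ZMod 2) G₂).comp (LinearMap.snd (ZMod 2) _ _))))

open Finset

theorem Nat.pred_mul_mod_self {n i : ℕ} (hi : i < n) :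
    (n - 1) * i % n = if i = 0 then 0 else n - i := by
  split_ifs with h0
  · simp [h0]
  obtain ⟨j, rfl⟩ := Nat.exists_eq_succ_of_ne_zero h0
  obtain ⟨d, rfl⟩ := Nat.exists_eq_add_of_lt hi
  rw [show (j + 1 + d + 1 - 1) * (j + 1) = (d + 1) + (j + 1 + d + 1) * j by
    rw [Nat.add_sub_cancel]; ring]
  rw [Nat.add_mul_mod_self_left, Nat.mod_eq_of_lt (by omega)]
  omega

theorem Nat.add_mod_eq_iff_mod_eq_pred_mul_add {n : ℕ} (hn : 0 < n) (i j k : ℕ) :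
    (k + i) % n = j % n ↔ i % n = ((n - 1) * k + j) % n := by
  have hk : (n - 1) * k + j + k ≡ j [MOD n] := by
    obtain ⟨m, rfl⟩ : ∃ m, n = m + 1 := ⟨n - 1, by omega⟩
    rw [Nat.add_sub_cancel, show m * k + j + k = j + (m + 1) * k by ring]
    exact Nat.add_mul_mod_self_left j (m + 1) k
  rw [add_comm k i]
  exact ⟨fun h => Nat.ModEq.add_right_cancel' k (Nat.ModEq.trans h hk.symm),
    fun h => (Nat.ModEq.add_right k h).trans hk⟩

namespace Polynomial

theorem reverse_reverse_of_coeff_zero_ne_zero {R : Type*} [Semiring R] {f : R[X]}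
    (hf : f.coeff 0 ≠ 0) : f.reverse.reverse = f := by
  have htr : f.natTrailingDegree = 0 := natTrailingDegree_eq_zero.2 (Or.inr hf)
  have hdeg : f.reverse.natDegree = f.natDegree := by rw [reverse_natDegree, htr, Nat.sub_zero]
  rw [reverse, hdeg, reverse, reflect_reflect]

section CommRing

variable {K : Type*} [CommRing K] {n : ℕ}

theorem monic_X_pow_sub_one (hn : 0 < n) : (X ^ n - 1 : K[X]).Monic := by
  simpa using monic_X_pow_sub_C (1 : K) hn.ne'

theorem X_pow_sub_one_dvd_X_pow_sub_X_pow_mod (m : ℕ) :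
    (X ^ n - 1 : K[X]) ∣ X ^ m - X ^ (m % n) := by
  obtain ⟨c, hc⟩ := sub_dvd_pow_sub_pow (X ^ n : K[X]) 1 (m / n)
  refine ⟨X ^ (m % n) * c, ?_⟩
  rw [one_pow, ← pow_mul] at hc
  nth_rewrite 1 [← Nat.mod_add_div m n]
  linear_combination X ^ (m % n) * hc

variable [Nontrivial K]

theorem X_pow_modByMonic_X_pow_sub_one (hn : 0 < n) (m : ℕ) :
    (X ^ m : K[X]) %ₘ (X ^ n - 1) = X ^ (m % n) := by
  rw [modByMonic_eq_of_dvd_sub (monic_X_pow_sub_one hn) (X_pow_sub_one_dvd_X_pow_sub_X_pow_mod m),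
    (modByMonic_eq_self_iff (monic_X_pow_sub_one hn)).2]
  have hdeg : (X ^ n - 1 : K[X]).degree = n := by simpa using degree_X_pow_sub_C hn (1 : K)
  rw [degree_X_pow, hdeg]
  exact_mod_cast Nat.mod_lt m hn

theorem coeff_zero_ne_zero_of_mul_eq_X_pow_sub_one (hn : 0 < n) {g h : K[X]}
    (hgh : g * h = X ^ n - 1) : g.coeff 0 ≠ 0 := by
  intro h0
  have := congrArg (coeff · 0) hgh
  simp [mul_coeff_zero, h0, hn.ne] at this

theorem reverse_X_pow_sub_one : (X ^ n - 1 : K[X]).reverse = 1 - X ^ n := by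
  have h : (X ^ n : K[X]).reverse = 1 := by
    rw [← one_mul (X ^ n), reverse_mul_X_pow, ← C_1, reverse_C]
  rw [sub_eq_add_neg, ← C_1, ← C_neg, reverse_add_C, natDegree_X_pow, h, C_neg, C_1]
  ring

end CommRing

section IsDomain

variable {K : Type*} [CommRing K] [IsDomain K] {n : ℕ}

theorem natDegree_add_natDegree_of_mul_eq_X_pow_sub_one (hn : 0 < n) {g h : K[X]}
    (hgh : g * h = X ^ n - 1) : g.natDegree + h.natDegree = n := by
  have hq : (X ^ n - 1 : K[X]) ≠ 0 := (monic_X_pow_sub_one hn).ne_zero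
  rw [← natDegree_mul (left_ne_zero_of_mul (hgh ▸ hq)) (right_ne_zero_of_mul (hgh ▸ hq)), hgh]
  simpa using natDegree_X_pow_sub_C (n := n) (r := (1 : K))

theorem reverse_mul_reverse_of_mul_eq_X_pow_sub_one [CharP K 2] {g h : K[X]}
    (hgh : g * h = X ^ n - 1) : h.reverse * g.reverse = X ^ n - 1 := by
  rw [← reverse_mul_of_domain, mul_comm, hgh, reverse_X_pow_sub_one, ← neg_sub, CharTwo.neg_eq]

theorem reverse_eq_mul_reverse_of_reverse_eq_mul [CharP K 2] (hn : 0 < n) {g₁ g₂ h₁ h₂ t : K[X]}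
    (he₁ : g₁ * h₁ = X ^ n - 1) (he₂ : g₂ * h₂ = X ^ n - 1) (ht : h₁.reverse = g₂ * t) :
    h₂.reverse = g₁ * t.reverse := by
  have hg₂ : g₂ ≠ 0 := left_ne_zero_of_mul (he₂ ▸ (monic_X_pow_sub_one hn).ne_zero)
  have hh₂ : h₂ = g₁.reverse * t := mul_left_cancel₀ hg₂ (by
    rw [he₂, ← reverse_mul_reverse_of_mul_eq_X_pow_sub_one he₁, ht]; ring)
  rw [hh₂, reverse_mul_of_domain,
    reverse_reverse_of_coeff_zero_ne_zero (coeff_zero_ne_zero_of_mul_eq_X_pow_sub_one hn he₁)]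

/-- In `K[X]/(Xⁿ - 1)` the class of `X ^ (n - 1)` inverts `X`, so
`g.comp (X ^ (n - 1)) ≡ X^{-deg g} · g.reverse`. -/
theorem X_pow_sub_one_dvd_comp_mul_reverse (hn : 0 < n) {g h : K[X]}
    (hgh : g * h = X ^ n - 1) : (X ^ n - 1 : K[X]) ∣ g.comp (X ^ (n - 1)) * h.reverse := by
  set r := AdjoinRoot.root (X ^ n - 1 : K[X])
  have hr : r ^ n = 1 := by
    have := AdjoinRoot.mk_self (f := (X ^ n - 1 : K[X]))
    rwa [map_sub, map_pow, AdjoinRoot.mk_X, map_one, sub_eq_zero] at this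
  have hr' : r ^ (n - 1) * r = 1 := by rw [← pow_succ, Nat.sub_add_cancel hn, hr]
  let : Invertible (r ^ (n - 1)) := ⟨r, by rwa [mul_comm], hr'⟩
  have hcomp := eval₂_reverse_mul_pow (algebraMap K (AdjoinRoot (X ^ n - 1 : K[X])))
    (r ^ (n - 1)) g
  rw [← aeval_def, ← aeval_def, show ⅟(r ^ (n - 1)) = r from rfl, AdjoinRoot.aeval_eq] at hcomp
  rw [← AdjoinRoot.mk_eq_zero, map_mul, ← AdjoinRoot.aeval_eq, aeval_comp, map_pow, aeval_X,
    ← hcomp, mul_right_comm, ← map_mul, ← reverse_mul_of_domain, hgh, reverse_X_pow_sub_one,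
    ← neg_sub (X ^ n : K[X]) 1, map_neg, AdjoinRoot.mk_self, neg_zero, zero_mul]

end IsDomain

section CyclicPairing

variable (K : Type*) [CommRing K]

noncomputable def cyclicPairing (n : ℕ) : K[X] →ₗ[K] K[X] →ₗ[K] K :=
  ∑ i ∈ range n, (LinearMap.mul K K).compl₁₂
    ((lcoeff K i).comp (modByMonicHom (X ^ n - 1))) ((lcoeff K i).comp (modByMonicHom (X ^ n - 1)))

variable {K} {n : ℕ}

theorem cyclicPairing_apply (f g : K[X]) :
    cyclicPairing K n f g =
      ∑ i ∈ range n, (f %ₘ (X ^ n - 1)).coeff i * (g %ₘ (X ^ n - 1)).coeff i := by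
  simp [cyclicPairing]

theorem cyclicPairing_eq_zero_of_dvd_right (hn : 0 < n) (f : K[X]) {g : K[X]}
    (hg : (X ^ n - 1 : K[X]) ∣ g) : cyclicPairing K n f g = 0 := by
  simp [cyclicPairing_apply, (modByMonic_eq_zero_iff_dvd (monic_X_pow_sub_one hn)).2 hg]

theorem cyclicPairing_eq_of_dvd_sub_right (hn : 0 < n) (f : K[X]) {g g' : K[X]}
    (hg : (X ^ n - 1 : K[X]) ∣ g - g') : cyclicPairing K n f g = cyclicPairing K n f g' := by
  rw [← sub_eq_zero, ← map_sub, cyclicPairing_eq_zero_of_dvd_right hn f hg]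

section Nontrivial

variable [Nontrivial K]

theorem cyclicPairing_X_pow_X_pow (hn : 0 < n) (i j : ℕ) :
    cyclicPairing K n (X ^ i) (X ^ j) = if i % n = j % n then 1 else 0 := by
  simp [cyclicPairing_apply, X_pow_modByMonic_X_pow_sub_one hn, coeff_X_pow, Nat.mod_lt _ hn,
    eq_comm]

theorem cyclicPairing_X_pow_mul_left (hn : 0 < n) (k : ℕ) (f g : K[X]) :
    cyclicPairing K n (X ^ k * f) g = cyclicPairing K n f (X ^ ((n - 1) * k) * g) := by
  have h : (cyclicPairing K n).comp (LinearMap.mulLeft K (X ^ k)) =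
      (cyclicPairing K n).compl₂ (LinearMap.mulLeft K (X ^ ((n - 1) * k))) := by
    ext i j
    simp only [LinearMap.comp_apply, LinearMap.compl₂_apply, LinearMap.mulLeft_apply,
      monomial_one_right_eq_X_pow, ← pow_add, cyclicPairing_X_pow_X_pow hn,
      Nat.add_mod_eq_iff_mod_eq_pred_mul_add hn]
  exact LinearMap.congr_fun₂ h f g

theorem cyclicPairing_mul_left (hn : 0 < n) (a f g : K[X]) :
    cyclicPairing K n (a * f) g = cyclicPairing K n f (a.comp (X ^ (n - 1)) * g) := by
  induction a using Polynomial.induction_on' with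
  | add p q hp hq => simp only [add_mul, add_comp, map_add, LinearMap.add_apply, hp, hq]
  | monomial k c =>
    rw [← C_mul_X_pow_eq_monomial, mul_comp, C_comp, X_pow_comp, ← pow_mul, mul_assoc, mul_assoc,
      ← smul_eq_C_mul, ← smul_eq_C_mul, map_smul, map_smul, LinearMap.smul_apply,
      cyclicPairing_X_pow_mul_left hn]

end Nontrivial

theorem cyclicPairing_mul_mul_reverse_eq_zero [IsDomain K] (hn : 0 < n) {g h : K[X]}
    (hgh : g * h = X ^ n - 1) (s t : K[X]) : cyclicPairing K n (g * s) (t * h.reverse) = 0 := by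
  rw [cyclicPairing_mul_left hn, mul_left_comm]
  exact cyclicPairing_eq_zero_of_dvd_right hn s
    (dvd_mul_of_dvd_right (X_pow_sub_one_dvd_comp_mul_reverse hn hgh) t)

end CyclicPairing

end Polynomial

theorem barPoly_eq_comp_modByMonic {n : ℕ} (hn : 0 < n) {v : (ZMod 2)[X]}
    (hv : v.natDegree < n) : barPoly n v = v.comp (X ^ (n - 1)) %ₘ (X ^ n - 1) := by
  set σ : ℕ → ℕ := fun i => if i = 0 then 0 else n - i
  have hσ : ∀ i < n, σ i < n ∧ σ (σ i) = i := by
    intro i hi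
    simp only [σ]
    split_ifs <;> omega
  have hbar : barPoly n v = ∑ i ∈ range n, C (v.coeff i) * X ^ σ i := by
    refine sum_nbij' σ σ (fun i hi => ?_) (fun i hi => ?_) (fun i hi => ?_) (fun i hi => ?_)
      (fun i hi => ?_) <;> rw [mem_range] at hi
    · exact mem_range.2 (hσ i hi).1
    · exact mem_range.2 (hσ i hi).1
    · exact (hσ i hi).2
    · exact (hσ i hi).2
    · rw [(hσ i hi).2]
  conv_rhs => rw [as_sum_range_C_mul_X_pow' v hv]
  rw [hbar, Polynomial.sum_comp, ← modByMonicHom_apply, map_sum]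
  refine sum_congr rfl fun i hi => ?_
  rw [mul_comp, C_comp, X_pow_comp, ← pow_mul, ← smul_eq_C_mul, ← smul_eq_C_mul, map_smul,
    modByMonicHom_apply, X_pow_modByMonic_X_pow_sub_one hn, Nat.pred_mul_mod_self (mem_range.1 hi)]

theorem cyclicPairing_mul_left_of_barPoly_eq_self {n : ℕ} (hn : 0 < n) {v : (ZMod 2)[X]}
    (hv : v.natDegree < n) (hbar : barPoly n v = v) (f g : (ZMod 2)[X]) :
    cyclicPairing (ZMod 2) n (v * f) g = cyclicPairing (ZMod 2) n f (v * g) := by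
  have hdvd := dvd_modByMonic_sub (v.comp (X ^ (n - 1))) (X ^ n - 1)
  rw [← barPoly_eq_comp_modByMonic hn hv, hbar] at hdvd
  rw [cyclicPairing_mul_left hn]
  refine cyclicPairing_eq_of_dvd_sub_right hn f ?_
  rw [← sub_mul]
  exact (dvd_sub_comm.1 hdvd).mul_right g

section Symplectic

variable {n : ℕ}

noncomputable def sympForm (n : ℕ) :
    LinearMap.BilinForm (ZMod 2) ((Fin n → ZMod 2) × (Fin n → ZMod 2)) :=
  (dotProductBilin (ZMod 2) (ZMod 2)).compl₁₂ (LinearMap.fst _ _ _) (LinearMap.snd _ _ _) -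
    (dotProductBilin (ZMod 2) (ZMod 2)).compl₁₂ (LinearMap.snd _ _ _) (LinearMap.fst _ _ _)

theorem sympForm_apply (u w : (Fin n → ZMod 2) × (Fin n → ZMod 2)) :
    sympForm n u w = sinner n u w := by
  simp [sympForm, sinner, dotProduct, sum_sub_distrib]

theorem sinner_swap (u w : (Fin n → ZMod 2) × (Fin n → ZMod 2)) :
    sinner n w u = -sinner n u w := by
  simp only [sinner, ← sum_neg_distrib]
  exact sum_congr rfl fun i _ => by ring

theorem sympForm_nondegenerate : (sympForm n).Nondegenerate := by
  have hrefl : (sympForm n).IsRefl := fun u w h => by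
    rw [sympForm_apply] at h ⊢
    rw [sinner_swap, h, neg_zero]
  refine hrefl.nondegenerate_iff_separatingLeft.2 fun u hu => Prod.ext (funext fun i => ?_)
    (funext fun i => ?_)
  · simpa [sympForm_apply, sinner, Pi.single_apply] using hu (0, Pi.single i 1)
  · simpa [sympForm_apply, sinner, Pi.single_apply] using hu (Pi.single i 1, 0)

theorem finrank_sympDual (C : Submodule (ZMod 2) ((Fin n → ZMod 2) × (Fin n → ZMod 2))) :
    Module.finrank (ZMod 2) (sympDual n C) = n + n - Module.finrank (ZMod 2) C := by
  have h : sympDual n C = (sympForm n).orthogonal C := by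
    ext w
    simp [sympDual, LinearMap.BilinForm.mem_orthogonal_iff, sympForm_apply]
  rw [h, LinearMap.BilinForm.finrank_orthogonal sympForm_nondegenerate, Module.finrank_prod,
    Module.finrank_fin_fun]

end Symplectic

section QuasiCyclic

variable {n : ℕ}

theorem cwL_apply (g₁ g₂ v a b : (ZMod 2)[X]) :
    cwL n g₁ g₂ v (a, b) = (vecL n ((a * (v * g₁) + b * g₂) %ₘ (X ^ n - 1)),
      vecL n ((a * g₁ + b * (v * g₂)) %ₘ (X ^ n - 1))) :=
  rfl

theorem cwL_mul_mul (g₁ g₂ v s t c d : (ZMod 2)[X]) :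
    cwL n (g₁ * s) (g₂ * t) v (c, d) = cwL n g₁ g₂ v (c * s, d * t) := by
  rw [cwL_apply, cwL_apply]
  ring_nf

theorem vecL_modByMonic_eq_zero_iff (hn : 0 < n) {f : (ZMod 2)[X]} :
    vecL n (f %ₘ (X ^ n - 1)) = 0 ↔ (X ^ n - 1 : (ZMod 2)[X]) ∣ f := by
  have hq := monic_X_pow_sub_one (K := ZMod 2) hn
  rw [← modByMonic_eq_zero_iff_dvd hq]
  refine ⟨fun h => ext fun k => ?_, fun h => by rw [h, map_zero]⟩
  rw [coeff_zero]
  by_cases hk : k < n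
  · exact congrFun h ⟨k, hk⟩
  · refine coeff_eq_zero_of_degree_lt ((degree_modByMonic_lt f hq).trans_le ?_)
    rw [show (X ^ n - 1 : (ZMod 2)[X]) = X ^ n - C 1 by rw [C_1], degree_X_pow_sub_C hn]
    exact_mod_cast not_lt.1 hk

theorem einner_vecL_modByMonic (f g : (ZMod 2)[X]) :
    einner n (vecL n (f %ₘ (X ^ n - 1))) (vecL n (g %ₘ (X ^ n - 1))) =
      cyclicPairing (ZMod 2) n f g := by
  rw [cyclicPairing_apply, ← Fin.sum_univ_eq_sum_range]
  rfl

theorem sinner_cwL (g₁ g₂ v G₁ G₂ V a b c d : (ZMod 2)[X]) :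
    sinner n (cwL n g₁ g₂ v (a, b)) (cwL n G₁ G₂ V (c, d)) =
      cyclicPairing (ZMod 2) n (a * (v * g₁) + b * g₂) (c * G₁ + d * (V * G₂)) -
        cyclicPairing (ZMod 2) n (a * g₁ + b * (v * g₂)) (c * (V * G₁) + d * G₂) := by
  rw [sinner, sum_sub_distrib, cwL_apply, cwL_apply, ← einner_vecL_modByMonic,
    ← einner_vecL_modByMonic]
  rfl

theorem sinner_cwL_cwL_reverse (hn : 0 < n) {g₁ g₂ v h₁ h₂ : (ZMod 2)[X]}
    (hvdeg : v.natDegree < n) (he₁ : g₁ * h₁ = X ^ n - 1) (he₂ : g₂ * h₂ = X ^ n - 1)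
    (hbar : barPoly n v = v) (a b c d : (ZMod 2)[X]) :
    sinner n (cwL n g₁ g₂ v (a, b)) (cwL n h₂.reverse h₁.reverse v (c, d)) = 0 := by
  set A := h₂.reverse
  set B := h₁.reverse
  set P := cyclicPairing (ZMod 2) n
  have k₁ : P (a * (v * g₁)) (d * (v * B)) = 0 := by
    rw [show a * (v * g₁) = g₁ * (a * v) by ring, show d * (v * B) = d * v * B by ring]
    exact cyclicPairing_mul_mul_reverse_eq_zero hn he₁ _ _
  have k₂ : P (a * g₁) (d * B) = 0 := by
    rw [mul_comm a]
    exact cyclicPairing_mul_mul_reverse_eq_zero hn he₁ _ _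
  have k₃ : P (b * g₂) (c * A) = 0 := by
    rw [mul_comm b]
    exact cyclicPairing_mul_mul_reverse_eq_zero hn he₂ _ _
  have k₄ : P (b * (v * g₂)) (c * (v * A)) = 0 := by
    rw [show b * (v * g₂) = g₂ * (b * v) by ring, show c * (v * A) = c * v * A by ring]
    exact cyclicPairing_mul_mul_reverse_eq_zero hn he₂ _ _
  have s₁ : P (a * (v * g₁)) (c * A) = P (a * g₁) (c * (v * A)) := by
    rw [mul_left_comm, cyclicPairing_mul_left_of_barPoly_eq_self hn hvdeg hbar, mul_left_comm]
  have s₂ : P (b * (v * g₂)) (d * B) = P (b * g₂) (d * (v * B)) := by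
    rw [mul_left_comm, cyclicPairing_mul_left_of_barPoly_eq_self hn hvdeg hbar, mul_left_comm]
  rw [sinner_cwL]
  simp only [map_add, LinearMap.add_apply]
  rw [k₁, k₂, k₃, k₄, s₁, s₂]
  ring

theorem cwL_eq_zero_iff (hn : 0 < n) {g₁ g₂ v h₁ h₂ : (ZMod 2)[X]}
    (he₁ : g₁ * h₁ = X ^ n - 1) (he₂ : g₂ * h₂ = X ^ n - 1)
    (hv : IsCoprime (v - 1) (X ^ n - 1)) (a b : (ZMod 2)[X]) :
    cwL n g₁ g₂ v (a, b) = 0 ↔ h₁ ∣ a ∧ h₂ ∣ b := by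
  have hq : (X ^ n - 1 : (ZMod 2)[X]) ≠ 0 := (monic_X_pow_sub_one hn).ne_zero
  have hg₁ : g₁ ≠ 0 := left_ne_zero_of_mul (he₁ ▸ hq)
  have hg₂ : g₂ ≠ 0 := left_ne_zero_of_mul (he₂ ▸ hq)
  have hv₂ : IsCoprime (v ^ 2 - 1) (X ^ n - 1) := by
    rw [show v ^ 2 - 1 = (v - 1) ^ 2 by
      linear_combination (v - 1) * CharTwo.two_eq_zero (R := (ZMod 2)[X])]
    exact hv.pow_left
  have hd₁ : h₁ ∣ a ↔ (X ^ n - 1) ∣ a * g₁ := by rw [← he₁, mul_comm a, mul_dvd_mul_iff_left hg₁]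
  have hd₂ : h₂ ∣ b ↔ (X ^ n - 1) ∣ b * g₂ := by rw [← he₂, mul_comm b, mul_dvd_mul_iff_left hg₂]
  rw [cwL_apply, Prod.mk_eq_zero, vecL_modByMonic_eq_zero_iff hn, vecL_modByMonic_eq_zero_iff hn,
    hd₁, hd₂]
  constructor
  · rintro ⟨⟨c₁, hc₁⟩, ⟨c₂, hc₂⟩⟩
    exact ⟨hv₂.symm.dvd_of_dvd_mul_left ⟨v * c₁ - c₂, by linear_combination v * hc₁ - hc₂⟩,
      hv₂.symm.dvd_of_dvd_mul_left ⟨v * c₂ - c₁, by linear_combination v * hc₂ - hc₁⟩⟩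
  · rintro ⟨⟨x, hx⟩, ⟨y, hy⟩⟩
    exact ⟨⟨v * x + y, by linear_combination v * hx + hy⟩,
      ⟨x + v * y, by linear_combination hx + v * hy⟩⟩

theorem finrank_range_cwL (hn : 0 < n) {g₁ g₂ v h₁ h₂ : (ZMod 2)[X]}
    (he₁ : g₁ * h₁ = X ^ n - 1) (he₂ : g₂ * h₂ = X ^ n - 1)
    (hv : IsCoprime (v - 1) (X ^ n - 1)) :
    Module.finrank (ZMod 2) (LinearMap.range (cwL n g₁ g₂ v)) = h₁.natDegree + h₂.natDegree := by
  have hq : (X ^ n - 1 : (ZMod 2)[X]) ≠ 0 := (monic_X_pow_sub_one hn).ne_zero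
  have hh₁ : h₁ ≠ 0 := right_ne_zero_of_mul (he₁ ▸ hq)
  have hh₂ : h₂ ≠ 0 := right_ne_zero_of_mul (he₂ ▸ hq)
  have hmod {h : (ZMod 2)[X]} (hh : h ≠ 0) (a : (ZMod 2)[X]) :
      a % h ∈ degreeLT (ZMod 2) h.natDegree := by
    rw [mem_degreeLT, ← degree_eq_natDegree hh]
    exact degree_mod_lt a hh
  have heq {h : (ZMod 2)[X]} (hh : h ≠ 0) {a : (ZMod 2)[X]} (ha : h ∣ a)
      (hdeg : a ∈ degreeLT (ZMod 2) h.natDegree) : a = 0 := by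
    rw [mem_degreeLT, ← degree_eq_natDegree hh] at hdeg
    exact eq_zero_of_dvd_of_degree_lt ha hdeg
  set φ := (cwL n g₁ g₂ v).comp
    ((degreeLT (ZMod 2) h₁.natDegree).subtype.prodMap (degreeLT (ZMod 2) h₂.natDegree).subtype)
  have hrange : LinearMap.range φ = LinearMap.range (cwL n g₁ g₂ v) := by
    refine le_antisymm (LinearMap.range_comp_le_range _ _) ?_
    rintro _ ⟨⟨a, b⟩, rfl⟩
    refine ⟨(⟨a % h₁, hmod hh₁ a⟩, ⟨b % h₂, hmod hh₂ b⟩), ?_⟩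
    change cwL n g₁ g₂ v (a % h₁, b % h₂) = cwL n g₁ g₂ v (a, b)
    rw [← sub_eq_zero, ← map_sub, Prod.mk_sub_mk, cwL_eq_zero_iff hn he₁ he₂ hv,
      EuclideanDomain.mod_eq_sub_mul_div a, EuclideanDomain.mod_eq_sub_mul_div b]
    exact ⟨⟨-(a / h₁), by ring⟩, ⟨-(b / h₂), by ring⟩⟩
  have hinj : Function.Injective φ := by
    rw [← LinearMap.ker_eq_bot, LinearMap.ker_eq_bot']
    rintro ⟨⟨a, ha⟩, ⟨b, hb⟩⟩ h
    obtain ⟨ha', hb'⟩ := (cwL_eq_zero_iff hn he₁ he₂ hv a b).1 h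
    exact Prod.ext (Subtype.ext (heq hh₁ ha' ha)) (Subtype.ext (heq hh₂ hb' hb))
  rw [← hrange, LinearMap.finrank_range_of_inj hinj, Module.finrank_prod,
    (degreeLTEquiv _ _).finrank_eq, (degreeLTEquiv _ _).finrank_eq, Module.finrank_fin_fun,
    Module.finrank_fin_fun]

end QuasiCyclic

theorem stmt_7_general (n : ℕ) (hn : 0 < n) (g₁ g₂ v h₁ h₂ : Polynomial (ZMod 2))
    (hdegv : v.natDegree < n)
    (he₁ : g₁ * h₁ = X ^ n - 1) (he₂ : g₂ * h₂ = X ^ n - 1)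
    (hvcop : IsCoprime (v - 1) (X ^ n - 1))
    (hdvd : g₂ ∣ h₁.reverse) (hbar : barPoly n v = v) :
    sympDual n (QCCode n g₁ g₂ v) ≤ QCCode n g₁ g₂ v := by
  obtain ⟨t, ht⟩ := hdvd
  have hA := reverse_eq_mul_reverse_of_reverse_eq_mul hn he₁ he₂ ht
  set D := LinearMap.range (cwL n h₂.reverse h₁.reverse v)
  have hDC : D ≤ QCCode n g₁ g₂ v := by
    rintro _ ⟨⟨c, d⟩, rfl⟩
    rw [hA, ht, cwL_mul_mul]
    exact ⟨_, rfl⟩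
  have hDS : D ≤ sympDual n (QCCode n g₁ g₂ v) := by
    rintro _ ⟨⟨c, d⟩, rfl⟩ _ ⟨⟨a, b⟩, rfl⟩
    exact sinner_cwL_cwL_reverse hn hdegv he₁ he₂ hbar a b c d
  have hdim : Module.finrank (ZMod 2) (sympDual n (QCCode n g₁ g₂ v)) ≤
      Module.finrank (ZMod 2) D := by
    have he₁' := reverse_mul_reverse_of_mul_eq_X_pow_sub_one he₁
    have he₂' := reverse_mul_reverse_of_mul_eq_X_pow_sub_one he₂
    rw [finrank_sympDual, QCCode, finrank_range_cwL hn he₁ he₂ hvcop,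
      finrank_range_cwL hn he₂' he₁' hvcop]
    have := natDegree_add_natDegree_of_mul_eq_X_pow_sub_one hn he₁'
    have := natDegree_add_natDegree_of_mul_eq_X_pow_sub_one hn he₂'
    have := reverse_natDegree_le h₁
    have := reverse_natDegree_le h₂
    omega
  exact Submodule.eq_of_le_of_finrank_le hDS hdim ▸ hDC

/-- if `g₂ ∣ g₁^⊥` (with `g₁^⊥ = h₁.reverse`) and `v̄ = v`, then
`C(g₁,g₂,v)` is symplectic dual-containing, i.e. `C(g₁,g₂,v)^⊥ₛ ⊆ C(g₁,g₂,v)`. -/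
theorem stmt_7 (n : ℕ) (hn : 0 < n) (g₁ g₂ v h₁ h₂ : Polynomial (ZMod 2))
    (hdeg₁ : g₁.natDegree < n) (hdeg₂ : g₂.natDegree < n) (hdegv : v.natDegree < n)
    (he₁ : g₁ * h₁ = X ^ n - 1) (he₂ : g₂ * h₂ = X ^ n - 1)
    (hcop : IsCoprime g₁ g₂) (hvcop : IsCoprime (v - 1) (X ^ n - 1))
    (hdvd : g₂ ∣ h₁.reverse) (hbar : barPoly n v = v) :
    sympDual n (QCCode n g₁ g₂ v) ≤ QCCode n g₁ g₂ v :=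
  stmt_7_general n hn g₁ g₂ v h₁ h₂ hdegv he₁ he₂ hvcop hdvd hbar
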